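/- Let f(z) = -eₙ + 2(z + eₙ)/|z + eₙ|² be the Möbius transformation mapping ℍⁿ onto 𝔹ⁿ. Then the Lipschitz constants 1/2 and 2 in the inequality (1/2)τ̃_{ℍⁿ}(x,y) ≤ τ̃_{𝔹ⁿ}(f(x), f(y)) ≤ 2τ̃_{ℍⁿ}(x,y) are sharp: (a) with x = teₙ, y = (1/t)eₙ (t > 1), f(x) = -((t-1)/(t+1))eₙ, f(y) = ((t-1)/(t+1))eₙ, and τ̃_{𝔹ⁿ}(f(x),f(y))/τ̃_{ℍⁿ}(x,y) = log(1 + √t - 1/√t)/log(1 + t - 1/t) → 1/2 as t → ∞; (b) with x = te₁ + eₙ, y = eₙ (t > 2), the ratio tends to 2 as t → ∞. -/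

import Mathlib

/-!
Each Cassinian distance involved is a supremum over the boundary that is attained, so it is
computed by finding the boundary point `p` minimising `‖x - p‖ * ‖y - p‖`: the origin for two
points of the `eₙ`-axis of `ℍⁿ`, the point `s e₁` with `s (t - s) = 1` for `t e₁ + eₙ` and `eₙ`,
the point `eₙ` for `∓ s eₙ` in `𝔹ⁿ`, and the radial projection of `w` for `w` and `0` in `𝔹ⁿ`.
The resulting ratios have the form `log (1 + u t) / log (1 + v t)` with `u t ~ A t ^ p` and
`v t ~ B t ^ q`, hence tend to `p / q`.
-/

/-- The scale invariant Cassinian metric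
`τ̃_D(x,y) = log(1 + sup_{p ∈ ∂D} |x-y|/√(|x-p||y-p|))`. -/
noncomputable def scTau {E : Type*} [NormedAddCommGroup E] (D : Set E) (x y : E) : ℝ :=
  Real.log (1 + ⨆ p : frontier D, ‖x - y‖ / Real.sqrt (‖x - (p : E)‖ * ‖y - (p : E)‖))

/-- The Möbius transformation `f(z) = -e + 2(z+e)/|z+e|²` (with `e = eₙ` it maps ℍⁿ onto 𝔹ⁿ). -/
noncomputable def mob {E : Type*} [NormedAddCommGroup E] [NormedSpace ℝ E] (e z : E) : E :=
  -e + (2 / ‖z + e‖ ^ 2) • (z + e)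

open Filter Real Metric Topology
open scoped InnerProductSpace

theorem scTau_eq_log_of_forall_le {E : Type*} [NormedAddCommGroup E] {D : Set E} {x y p₀ : E}
    (hp₀ : p₀ ∈ frontier D) (hpos : 0 < ‖x - p₀‖ * ‖y - p₀‖)
    (hmin : ∀ p ∈ frontier D, ‖x - p₀‖ * ‖y - p₀‖ ≤ ‖x - p‖ * ‖y - p‖) :
    scTau D x y = log (1 + ‖x - y‖ / √(‖x - p₀‖ * ‖y - p₀‖)) := by
  have hmax : IsMaxOn (fun p => ‖x - y‖ / √(‖x - p‖ * ‖y - p‖)) (frontier D) p₀ :=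
    fun p hp => div_le_div_of_nonneg_left (norm_nonneg _) (sqrt_pos.2 hpos)
      (sqrt_le_sqrt (hmin p hp))
  rw [scTau, hmax.iSup_eq hp₀]

section UpperHalfSpace

variable {n : ℕ}

theorem frontier_setOf_apply_pos (i : Fin n) :
    frontier {z : EuclideanSpace ℝ (Fin n) | z i > 0} = {z | z i = 0} := by
  have hsurj : Function.Surjective (EuclideanSpace.proj i : EuclideanSpace ℝ (Fin n) →L[ℝ] ℝ) :=
    fun a => ⟨EuclideanSpace.single i a, by simp⟩
  change frontier (EuclideanSpace.proj i ⁻¹' Set.Ioi 0) = _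
  rw [ContinuousLinearMap.frontier_preimage _ hsurj, frontier_Ioi]
  rfl

theorem scTau_setOf_apply_pos_smul_single (i : Fin n) {a b : ℝ} (ha : 0 < a) (hb : 0 < b) :
    scTau {z : EuclideanSpace ℝ (Fin n) | z i > 0}
      (a • EuclideanSpace.single i 1) (b • EuclideanSpace.single i 1)
      = log (1 + |a - b| / √(a * b)) := by
  have hcoord : ∀ c : ℝ, ∀ p : EuclideanSpace ℝ (Fin n), p i = 0 →
      |c| ≤ ‖c • EuclideanSpace.single i 1 - p‖ := fun c p hp => by
    simpa [hp] using PiLp.norm_apply_le (c • EuclideanSpace.single i (1 : ℝ) - p) i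
  have h0 : (0 : EuclideanSpace ℝ (Fin n)) ∈ frontier {z : EuclideanSpace ℝ (Fin n) | z i > 0} := by
    simp [frontier_setOf_apply_pos]
  rw [scTau_eq_log_of_forall_le h0 (by simp [norm_smul, ha.ne', hb.ne'])]
  · simp [← sub_smul, norm_smul, abs_of_pos ha, abs_of_pos hb]
  · intro p hp
    rw [frontier_setOf_apply_pos] at hp
    have hpa := hcoord a p hp
    have hpb := hcoord b p hp
    simp only [sub_zero, norm_smul, PiLp.norm_single, norm_one, mul_one, Real.norm_eq_abs]
    exact mul_le_mul hpa hpb (abs_nonneg b) ((abs_nonneg a).trans hpa)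

theorem norm_add_single_of_apply_eq_zero {i : Fin n} {w : EuclideanSpace ℝ (Fin n)}
    (hw : w i = 0) : ‖w + EuclideanSpace.single i 1‖ = √(‖w‖ * ‖w‖ + 1) := by
  rw [norm_add_eq_sqrt_iff_real_inner_eq_zero.mpr (by simp [EuclideanSpace.inner_single_right, hw])]
  simp

theorem scTau_setOf_apply_pos_smul_single_add_single {i j : Fin n} (hij : j ≠ i) {t : ℝ}
    (ht : 2 ≤ t) :
    scTau {z : EuclideanSpace ℝ (Fin n) | z i > 0}
      (t • EuclideanSpace.single j 1 + EuclideanSpace.single i 1) (EuclideanSpace.single i 1)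
      = log (1 + √t) := by
  set eᵢ : EuclideanSpace ℝ (Fin n) := EuclideanSpace.single i 1
  set eⱼ : EuclideanSpace ℝ (Fin n) := EuclideanSpace.single j 1
  have hfr : ∀ p, p ∈ frontier {z : EuclideanSpace ℝ (Fin n) | z i > 0} ↔ p i = 0 := fun p => by
    rw [frontier_setOf_apply_pos]; rfl
  -- Pythagoras along `eᵢ`, then `(a² + 1)(b² + 1) = (ab - 1)² + (a + b)²`
  have hprod : ∀ p : EuclideanSpace ℝ (Fin n), p i = 0 → ‖t • eⱼ + eᵢ - p‖ * ‖eᵢ - p‖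
      = √((‖t • eⱼ - p‖ * ‖-p‖ - 1) ^ 2 + (‖t • eⱼ - p‖ + ‖-p‖) ^ 2) := fun p hp => by
    rw [show t • eⱼ + eᵢ - p = (t • eⱼ - p) + eᵢ by abel, show eᵢ - p = -p + eᵢ by abel,
      norm_add_single_of_apply_eq_zero (by simp [eⱼ, hp, hij]),
      norm_add_single_of_apply_eq_zero (by simp [hp]), ← sqrt_mul (by positivity)]
    ring_nf
  obtain ⟨s, hs0, hst⟩ : ∃ s : ℝ, 0 < s ∧ s * (t - s) = 1 := by
    have hd : 0 ≤ t ^ 2 - 4 := by nlinarith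
    refine ⟨(t - √(t ^ 2 - 4)) / 2, ?_, ?_⟩
    · have : √(t ^ 2 - 4) < t := (sqrt_lt' (by linarith)).mpr (by linarith)
      linarith
    · nlinarith [sq_sqrt hd]
  have hp₀ : s • eⱼ ∈ frontier {z : EuclideanSpace ℝ (Fin n) | z i > 0} :=
    (hfr _).mpr (by simp [eⱼ, hij])
  have hprod₀ : ‖t • eⱼ + eᵢ - s • eⱼ‖ * ‖eᵢ - s • eⱼ‖ = t := by
    rw [hprod _ ((hfr _).mp hp₀), ← sub_smul, norm_neg]
    simp only [eⱼ, norm_smul, PiLp.norm_single, norm_one, mul_one, Real.norm_eq_abs,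
      abs_of_pos hs0, abs_of_pos (show 0 < t - s by nlinarith)]
    rw [mul_comm (t - s), hst, sub_self, sub_add_cancel, zero_pow two_ne_zero, zero_add,
      sqrt_sq (by linarith)]
  rw [scTau_eq_log_of_forall_le hp₀ (by linarith) fun p hp => ?_, hprod₀]
  · simp [eⱼ, norm_smul, abs_of_nonneg (show 0 ≤ t by linarith)]
  · have htri : t ≤ ‖t • eⱼ - p‖ + ‖-p‖ := by
      simpa [eⱼ, norm_smul, abs_of_nonneg (show 0 ≤ t by linarith)] using
        norm_sub_le (t • eⱼ - p) (-p)
    rw [hprod₀, hprod p ((hfr p).mp hp)]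
    exact le_sqrt_of_sq_le (by nlinarith [sq_nonneg (‖t • eⱼ - p‖ * ‖-p‖ - 1)])

end UpperHalfSpace

section UnitBall

variable {F : Type*} [NormedAddCommGroup F] [InnerProductSpace ℝ F]

theorem mem_frontier_ball_zero_one {p : F} : p ∈ frontier (ball (0 : F) 1) ↔ ‖p‖ = 1 := by
  rw [frontier_ball 0 one_ne_zero, mem_sphere_zero_iff_norm]

theorem scTau_ball_neg_smul_smul {e : F} (he : ‖e‖ = 1) {s : ℝ} (hs0 : 0 ≤ s) (hs1 : s < 1) :
    scTau (ball (0 : F) 1) (-(s • e)) (s • e) = log (1 + 2 * s / √(1 - s ^ 2)) := by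
  have hprod₀ : ‖-(s • e) - e‖ * ‖s • e - e‖ = 1 - s ^ 2 := by
    rw [show -(s • e) - e = -((s + 1) • e) by module, show s • e - e = -((1 - s) • e) by module]
    simp only [norm_neg, norm_smul, he, mul_one, Real.norm_eq_abs,
      abs_of_pos (by linarith : 0 < s + 1), abs_of_pos (by linarith : 0 < 1 - s)]
    ring
  rw [scTau_eq_log_of_forall_le (mem_frontier_ball_zero_one.mpr he) (by nlinarith) fun p hp => ?_,
    hprod₀]
  · rw [show -(s • e) - s • e = -((2 * s) • e) by module, norm_neg, norm_smul, he, mul_one,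
      Real.norm_eq_abs, abs_of_nonneg (by linarith)]
  · have hp1 := mem_frontier_ball_zero_one.mp hp
    -- the cross terms cancel in the inner product, which is then bounded by Cauchy–Schwarz
    have hinner : ⟪-(s • e) - p, s • e - p⟫_ℝ = 1 - s ^ 2 := by
      simp only [inner_sub_left, inner_sub_right, inner_neg_left, real_inner_smul_left,
        real_inner_smul_right, real_inner_self_eq_norm_sq, norm_smul, he, hp1, mul_one,
        Real.norm_eq_abs, sq_abs, real_inner_comm p e]
      ring
    rw [hprod₀, ← hinner]
    exact real_inner_le_norm _ _

theorem scTau_ball_zero {w : F} (hw0 : w ≠ 0) (hw1 : ‖w‖ < 1) :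
    scTau (ball (0 : F) 1) w 0 = log (1 + ‖w‖ / √(1 - ‖w‖)) := by
  have hw : 0 < ‖w‖ := norm_pos_iff.mpr hw0
  have hunit : ‖‖w‖⁻¹ • w‖ = 1 := norm_smul_inv_norm hw0
  have hp₀ : ‖w‖⁻¹ • w ∈ frontier (ball (0 : F) 1) := mem_frontier_ball_zero_one.mpr hunit
  have hprod₀ : ‖w - ‖w‖⁻¹ • w‖ * ‖0 - ‖w‖⁻¹ • w‖ = 1 - ‖w‖ := by
    rw [zero_sub, norm_neg, hunit, mul_one,
      show w - ‖w‖⁻¹ • w = -((‖w‖⁻¹ - 1) • w) by module, norm_neg, norm_smul, Real.norm_eq_abs,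
      abs_of_pos (by rw [sub_pos]; exact one_lt_inv_iff₀.mpr ⟨hw, hw1⟩)]
    field_simp
  rw [scTau_eq_log_of_forall_le hp₀ (by linarith) fun p hp => ?_, hprod₀, sub_zero]
  have hp1 := mem_frontier_ball_zero_one.mp hp
  rw [hprod₀, zero_sub, norm_neg, hp1, mul_one]
  linarith [norm_sub_norm_le p w, norm_sub_rev p w]

end UnitBall

section Mobius

variable {F : Type*} [NormedAddCommGroup F] [InnerProductSpace ℝ F]

theorem mob_smul_self {e : F} (he : ‖e‖ = 1) {a : ℝ} (ha : 1 + a ≠ 0) :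
    mob e (a • e) = ((1 - a) / (1 + a)) • e := by
  rw [mob, show a • e + e = (1 + a) • e by module, norm_smul, he, mul_one, Real.norm_eq_abs,
    sq_abs, smul_smul]
  rw [show (1 - a) / (1 + a) = 2 / (1 + a) ^ 2 * (1 + a) - 1 by field_simp; ring]
  module

theorem mob_self {e : F} (he : ‖e‖ = 1) : mob e e = 0 := by
  simpa using mob_smul_self he (a := 1) (by norm_num)

theorem mob_smul_self_eq_neg {e : F} (he : ‖e‖ = 1) {t : ℝ} (ht : 0 < t) :
    mob e (t • e) = -(((t - 1) / (t + 1)) • e) := by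
  rw [mob_smul_self he (by linarith), ← neg_smul, ← neg_div, neg_sub, add_comm t]

theorem mob_one_div_smul_self {e : F} (he : ‖e‖ = 1) {t : ℝ} (ht : 0 < t) :
    mob e ((1 / t) • e) = ((t - 1) / (t + 1)) • e := by
  rw [mob_smul_self he (by positivity)]
  congr 1
  field_simp

theorem norm_smul_add_smul_of_inner_eq_zero {u e : F} (hu : ‖u‖ = 1) (he : ‖e‖ = 1)
    (horth : ⟪u, e⟫_ℝ = 0) (a b : ℝ) : ‖a • u + b • e‖ = √(a ^ 2 + b ^ 2) := by
  rw [norm_add_eq_sqrt_iff_real_inner_eq_zero.mpr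
    (by rw [real_inner_smul_left, real_inner_smul_right, horth, mul_zero, mul_zero])]
  simp only [norm_smul, hu, he, mul_one, Real.norm_eq_abs, ← sq, sq_abs]

theorem norm_mob_smul_add_self {u e : F} (hu : ‖u‖ = 1) (he : ‖e‖ = 1) (horth : ⟪u, e⟫_ℝ = 0)
    {t : ℝ} (ht : 0 ≤ t) : ‖mob e (t • u + e)‖ = t / √(t ^ 2 + 4) := by
  have hpyth := norm_smul_add_smul_of_inner_eq_zero hu he horth
  have hpos : 0 < t ^ 2 + 4 := by positivity
  have hmob : mob e (t • u + e) = (t / (t ^ 2 + 4)) • ((2 : ℝ) • u + (-t) • e) := by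
    rw [mob, show t • u + e + e = t • u + (2 : ℝ) • e by module, hpyth,
      sq_sqrt (by positivity)]
    have he_coeff : 2 / (t ^ 2 + 2 ^ 2) * 2 - 1 = t / (t ^ 2 + 4) * -t := by
      field_simp
      ring
    have hu_coeff : 2 / (t ^ 2 + 2 ^ 2) * t = t / (t ^ 2 + 4) * 2 := by
      field_simp
      ring
    linear_combination (norm := module) he_coeff • e + hu_coeff • u
  rw [hmob, norm_smul, hpyth, Real.norm_eq_abs, abs_of_nonneg (by positivity), neg_sq,
    add_comm (2 ^ 2 : ℝ), show (2 : ℝ) ^ 2 = 4 by norm_num]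
  field_simp
  rw [sq_sqrt hpos.le]

end Mobius

section Asymptotics

theorem tendsto_log_one_add_div_log {u : ℝ → ℝ} {p A : ℝ} (hp : 0 < p) (hA : 0 < A)
    (hu : Tendsto (fun t => u t / t ^ p) atTop (𝓝 A)) :
    Tendsto (fun t => log (1 + u t) / log t) atTop (𝓝 p) := by
  have hquot : Tendsto (fun t => (1 + u t) / t ^ p) atTop (𝓝 A) := by
    simpa [add_div] using ((tendsto_rpow_atTop hp).inv_tendsto_atTop).add hu
  have hlog : Tendsto (fun t => log ((1 + u t) / t ^ p) / log t + p) atTop (𝓝 (0 + p)) :=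
    (((continuousAt_log hA.ne').tendsto.comp hquot).div_atTop tendsto_log_atTop).add_const p
  rw [zero_add] at hlog
  refine hlog.congr' ?_
  filter_upwards [hquot.eventually (eventually_gt_nhds hA), eventually_gt_atTop 1]
    with t hpos ht
  have htp : 0 < t ^ p := rpow_pos_of_pos (by linarith) p
  have h1u : 0 < 1 + u t := by simpa [htp] using mul_pos hpos htp
  rw [log_div h1u.ne' htp.ne', log_rpow (by linarith)]
  field_simp [(log_pos ht).ne']
  ring

theorem tendsto_log_one_add_div_log_one_add {u v : ℝ → ℝ} {p q A B : ℝ} (hp : 0 < p)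
    (hq : 0 < q) (hA : 0 < A) (hB : 0 < B) (hu : Tendsto (fun t => u t / t ^ p) atTop (𝓝 A))
    (hv : Tendsto (fun t => v t / t ^ q) atTop (𝓝 B)) :
    Tendsto (fun t => log (1 + u t) / log (1 + v t)) atTop (𝓝 (p / q)) := by
  refine ((tendsto_log_one_add_div_log hp hA hu).div (tendsto_log_one_add_div_log hq hB hv)
    hq.ne').congr' ?_
  filter_upwards [eventually_gt_atTop 1] with t ht
  exact div_div_div_cancel_right₀ (log_pos ht).ne' _ _

theorem tendsto_one_sub_inv_rpow {q : ℝ} (hq : 0 < q) :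
    Tendsto (fun t : ℝ => 1 - 1 / t ^ q) atTop (𝓝 1) := by
  simpa using tendsto_const_nhds.sub (tendsto_rpow_atTop hq).inv_tendsto_atTop

end Asymptotics

section Sharpness

theorem tendsto_log_ratio_axis :
    Tendsto (fun t => log (1 + √t - 1 / √t) / log (1 + t - 1 / t)) atTop (𝓝 (1 / 2)) := by
  have hu : Tendsto (fun t : ℝ => (√t - 1 / √t) / t ^ (1 / 2 : ℝ)) atTop (𝓝 1) := by
    refine (tendsto_one_sub_inv_rpow one_pos).congr' ?_
    filter_upwards [eventually_gt_atTop 0] with t ht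
    rw [← sqrt_eq_rpow, rpow_one, sub_div, div_self (sqrt_pos.mpr ht).ne', div_div,
      mul_self_sqrt ht.le]
  have hv : Tendsto (fun t : ℝ => (t - 1 / t) / t ^ (1 : ℝ)) atTop (𝓝 1) := by
    refine (tendsto_one_sub_inv_rpow two_pos).congr' ?_
    filter_upwards [eventually_gt_atTop 0] with t ht
    rw [rpow_one, rpow_two, sub_div, div_self ht.ne', div_div, sq]
  simpa [add_sub_assoc] using
    tendsto_log_one_add_div_log_one_add (by norm_num) one_pos one_pos one_pos hu hv

theorem tendsto_div_sqrt_sq_add_four : Tendsto (fun t : ℝ => t / √(t ^ 2 + 4)) atTop (𝓝 1) := by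
  have h : Tendsto (fun t : ℝ => (√(1 + 4 / t ^ 2))⁻¹) atTop (𝓝 1) := by
    have h4 : Tendsto (fun t : ℝ => 4 / t ^ 2) atTop (𝓝 0) :=
      tendsto_const_nhds.div_atTop (tendsto_pow_atTop two_ne_zero)
    simpa using ((continuous_sqrt.tendsto _).comp (h4.const_add 1)).inv₀ (by simp)
  refine h.congr' ?_
  filter_upwards [eventually_gt_atTop 0] with t ht
  rw [← sqrt_inv, show (1 + 4 / t ^ 2)⁻¹ = (t / √(t ^ 2 + 4)) ^ 2 by
    rw [div_pow, sq_sqrt (by positivity)]; field_simp, sqrt_sq (by positivity)]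

theorem tendsto_log_ratio_horizontal :
    Tendsto (fun t => log (1 + t / 2 * √(1 + t / √(t ^ 2 + 4))) / log (1 + √t)) atTop
      (𝓝 2) := by
  have hu : Tendsto (fun t : ℝ => t / 2 * √(1 + t / √(t ^ 2 + 4)) / t ^ (1 : ℝ)) atTop
      (𝓝 (√2 / 2)) := by
    have := ((continuous_sqrt.tendsto _).comp
      (tendsto_div_sqrt_sq_add_four.const_add 1)).div_const 2
    norm_num at this
    refine this.congr' ?_
    filter_upwards [eventually_gt_atTop 0] with t ht
    simp only [rpow_one]
    field_simp
  have hv : Tendsto (fun t : ℝ => √t / t ^ (1 / 2 : ℝ)) atTop (𝓝 1) := by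
    refine tendsto_const_nhds.congr' ?_
    filter_upwards [eventually_gt_atTop 0] with t ht
    rw [← sqrt_eq_rpow, div_self (sqrt_pos.mpr ht).ne']
  simpa using tendsto_log_one_add_div_log_one_add one_pos (by norm_num) (by positivity) one_pos
    hu hv

theorem two_mul_div_sqrt_one_sub_sq_eq_sqrt_sub_one_div_sqrt {t : ℝ} (ht : 0 < t) :
    2 * ((t - 1) / (t + 1)) / √(1 - ((t - 1) / (t + 1)) ^ 2) = √t - 1 / √t := by
  have hsq : √(1 - ((t - 1) / (t + 1)) ^ 2) = 2 * √t / (t + 1) := by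
    rw [show 1 - ((t - 1) / (t + 1)) ^ 2 = (2 * √t / (t + 1)) ^ 2 by
      rw [div_pow (2 * √t), mul_pow, sq_sqrt ht.le]; field_simp; ring]
    exact sqrt_sq (by positivity)
  rw [hsq]
  field_simp
  rw [sq_sqrt ht.le]

theorem div_sqrt_one_sub_div_sqrt_sq_add_four {t : ℝ} (ht : 0 < t) :
    t / √(t ^ 2 + 4) / √(1 - t / √(t ^ 2 + 4)) = t / 2 * √(1 + t / √(t ^ 2 + 4)) := by
  set g := √(t ^ 2 + 4)
  have hg : g ^ 2 = t ^ 2 + 4 := sq_sqrt (by positivity)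
  have htg : t < g := lt_sqrt_of_sq_lt (by linarith)
  have hg0 : 0 < g := ht.trans htg
  have hprod : √(1 - t / g) * √(1 + t / g) = 2 / g := by
    rw [← sqrt_mul (by rw [sub_nonneg, div_le_one hg0]; exact htg.le),
      show (1 - t / g) * (1 + t / g) = (2 / g) ^ 2 by field_simp; linarith, sqrt_sq (by positivity)]
  have hsub : 0 < √(1 - t / g) := sqrt_pos.mpr (by rw [sub_pos, div_lt_one hg0]; exact htg)
  rw [div_eq_iff hsub.ne', mul_assoc, mul_comm (√(1 + t / g)), hprod]
  field_simp

variable {n : ℕ}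

theorem scTau_ratio_axis (i : Fin n) {t : ℝ} (ht : 1 < t) :
    scTau (ball (0 : EuclideanSpace ℝ (Fin n)) 1)
        (mob (EuclideanSpace.single i 1) (t • EuclideanSpace.single i 1))
        (mob (EuclideanSpace.single i 1) ((1 / t) • EuclideanSpace.single i 1))
      / scTau {z : EuclideanSpace ℝ (Fin n) | z i > 0}
        (t • EuclideanSpace.single i 1) ((1 / t) • EuclideanSpace.single i 1)
      = log (1 + √t - 1 / √t) / log (1 + t - 1 / t) := by
  have he : ‖(EuclideanSpace.single i 1 : EuclideanSpace ℝ (Fin n))‖ = 1 := by simp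
  have ht0 : 0 < t := by linarith
  have hs0 : 0 ≤ (t - 1) / (t + 1) := div_nonneg (by linarith) (by linarith)
  have hs1 : (t - 1) / (t + 1) < 1 := (div_lt_one (by linarith)).mpr (by linarith)
  rw [mob_smul_self_eq_neg he ht0, mob_one_div_smul_self he ht0,
    scTau_ball_neg_smul_smul he hs0 hs1, two_mul_div_sqrt_one_sub_sq_eq_sqrt_sub_one_div_sqrt ht0,
    scTau_setOf_apply_pos_smul_single i ht0 (by positivity), mul_one_div_cancel ht0.ne',
    sqrt_one, div_one, abs_of_pos (by rw [sub_pos, div_lt_iff₀ ht0]; nlinarith), add_sub_assoc,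
    add_sub_assoc]

theorem scTau_ratio_horizontal {i j : Fin n} (hij : j ≠ i) {t : ℝ} (ht : 2 ≤ t) :
    scTau (ball (0 : EuclideanSpace ℝ (Fin n)) 1)
        (mob (EuclideanSpace.single i 1)
          (t • EuclideanSpace.single j 1 + EuclideanSpace.single i 1))
        (mob (EuclideanSpace.single i 1) (EuclideanSpace.single i 1))
      / scTau {z : EuclideanSpace ℝ (Fin n) | z i > 0}
        (t • EuclideanSpace.single j 1 + EuclideanSpace.single i 1) (EuclideanSpace.single i 1)
      = log (1 + t / 2 * √(1 + t / √(t ^ 2 + 4))) / log (1 + √t) := by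
  have he : ‖(EuclideanSpace.single i 1 : EuclideanSpace ℝ (Fin n))‖ = 1 := by simp
  have hu : ‖(EuclideanSpace.single j 1 : EuclideanSpace ℝ (Fin n))‖ = 1 := by simp
  have horth : ⟪(EuclideanSpace.single j 1 : EuclideanSpace ℝ (Fin n)),
      EuclideanSpace.single i 1⟫_ℝ = 0 := by
    simp [EuclideanSpace.inner_single_left, hij]
  have ht0 : 0 < t := by linarith
  have hnorm := norm_mob_smul_add_self hu he horth ht0.le
  have hnorm1 : t / √(t ^ 2 + 4) < 1 :=
    (div_lt_one (by positivity)).mpr (lt_sqrt_of_sq_lt (by linarith))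
  rw [mob_self he, scTau_ball_zero (norm_pos_iff.mp (by rw [hnorm]; positivity))
    (by rw [hnorm]; exact hnorm1), hnorm, div_sqrt_one_sub_div_sqrt_sq_add_four ht0,
    scTau_setOf_apply_pos_smul_single_add_single hij ht]

end Sharpness

/-- sharpness of the constants 1/2 and 2 for the distortion of the
scale invariant Cassinian metric under the Möbius map of ℍⁿ onto 𝔹ⁿ. -/
theorem stmt19 (n : ℕ) (hn : 2 ≤ n) :
    (∀ t : ℝ, 1 < t →
      mob (EuclideanSpace.single (⟨n - 1, by omega⟩ : Fin n) (1 : ℝ))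
          (t • EuclideanSpace.single (⟨n - 1, by omega⟩ : Fin n) (1 : ℝ))
        = -(((t - 1) / (t + 1)) •
            EuclideanSpace.single (⟨n - 1, by omega⟩ : Fin n) (1 : ℝ)) ∧
      mob (EuclideanSpace.single (⟨n - 1, by omega⟩ : Fin n) (1 : ℝ))
          ((1 / t) • EuclideanSpace.single (⟨n - 1, by omega⟩ : Fin n) (1 : ℝ))
        = ((t - 1) / (t + 1)) •
            EuclideanSpace.single (⟨n - 1, by omega⟩ : Fin n) (1 : ℝ) ∧
      scTau (Metric.ball (0 : EuclideanSpace ℝ (Fin n)) 1)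
          (mob (EuclideanSpace.single (⟨n - 1, by omega⟩ : Fin n) (1 : ℝ))
            (t • EuclideanSpace.single (⟨n - 1, by omega⟩ : Fin n) (1 : ℝ)))
          (mob (EuclideanSpace.single (⟨n - 1, by omega⟩ : Fin n) (1 : ℝ))
            ((1 / t) • EuclideanSpace.single (⟨n - 1, by omega⟩ : Fin n) (1 : ℝ)))
        / scTau {z : EuclideanSpace ℝ (Fin n) | z ⟨n - 1, by omega⟩ > 0}
            (t • EuclideanSpace.single (⟨n - 1, by omega⟩ : Fin n) (1 : ℝ))
            ((1 / t) • EuclideanSpace.single (⟨n - 1, by omega⟩ : Fin n) (1 : ℝ))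
        = Real.log (1 + Real.sqrt t - 1 / Real.sqrt t)
            / Real.log (1 + t - 1 / t)) ∧
    Filter.Tendsto
      (fun t : ℝ =>
        scTau (Metric.ball (0 : EuclideanSpace ℝ (Fin n)) 1)
            (mob (EuclideanSpace.single (⟨n - 1, by omega⟩ : Fin n) (1 : ℝ))
              (t • EuclideanSpace.single (⟨n - 1, by omega⟩ : Fin n) (1 : ℝ)))
            (mob (EuclideanSpace.single (⟨n - 1, by omega⟩ : Fin n) (1 : ℝ))
              ((1 / t) • EuclideanSpace.single (⟨n - 1, by omega⟩ : Fin n) (1 : ℝ)))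
          / scTau {z : EuclideanSpace ℝ (Fin n) | z ⟨n - 1, by omega⟩ > 0}
              (t • EuclideanSpace.single (⟨n - 1, by omega⟩ : Fin n) (1 : ℝ))
              ((1 / t) • EuclideanSpace.single (⟨n - 1, by omega⟩ : Fin n) (1 : ℝ)))
      Filter.atTop (nhds (1 / 2)) ∧
    Filter.Tendsto
      (fun t : ℝ =>
        scTau (Metric.ball (0 : EuclideanSpace ℝ (Fin n)) 1)
            (mob (EuclideanSpace.single (⟨n - 1, by omega⟩ : Fin n) (1 : ℝ))
              (t • EuclideanSpace.single (⟨0, by omega⟩ : Fin n) (1 : ℝ)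
                + EuclideanSpace.single (⟨n - 1, by omega⟩ : Fin n) (1 : ℝ)))
            (mob (EuclideanSpace.single (⟨n - 1, by omega⟩ : Fin n) (1 : ℝ))
              (EuclideanSpace.single (⟨n - 1, by omega⟩ : Fin n) (1 : ℝ)))
          / scTau {z : EuclideanSpace ℝ (Fin n) | z ⟨n - 1, by omega⟩ > 0}
              (t • EuclideanSpace.single (⟨0, by omega⟩ : Fin n) (1 : ℝ)
                + EuclideanSpace.single (⟨n - 1, by omega⟩ : Fin n) (1 : ℝ))
              (EuclideanSpace.single (⟨n - 1, by omega⟩ : Fin n) (1 : ℝ)))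
      Filter.atTop (nhds 2) := by
  have hij : (⟨0, by omega⟩ : Fin n) ≠ ⟨n - 1, by omega⟩ := by
    simp only [ne_eq, Fin.mk.injEq]
    omega
  have he : ‖EuclideanSpace.single (⟨n - 1, by omega⟩ : Fin n) (1 : ℝ)‖ = 1 := by simp
  refine ⟨fun t ht => ⟨mob_smul_self_eq_neg he (by linarith),
    mob_one_div_smul_self he (by linarith), scTau_ratio_axis _ ht⟩, ?_, ?_⟩
  · refine tendsto_log_ratio_axis.congr' ?_
    filter_upwards [eventually_gt_atTop 1] with t ht
    exact (scTau_ratio_axis _ ht).symm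
  · refine tendsto_log_ratio_horizontal.congr' ?_
    filter_upwards [eventually_ge_atTop 2] with t ht
    exact (scTau_ratio_horizontal hij ht).symm
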